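/- arXiv:2009.13288 — 3 statements merged into one kernel-verified Lean document; each statement's English description precedes it below -/
import Mathlib

section
/- Let V be a K×K positive semi-definite Hermitian matrix with pseudo-inverse V⁻¹, and let q be a vector in ℂ^K satisfying V⁻¹ V q = q (i.e., q lies in the range of V). For λ > 0, let W := V + λ·I. Then the Euclidean distance between the pseudo-inverse solutions satisfies ‖V⁻¹ q − W⁻¹ q‖ ≤ λ · ‖V⁻¹‖² · ‖q‖, where ‖·‖ denotes the operator (spectral) norm for matrices and the ℓ2 norm for vectors. -/
/-!
Since `V` is Hermitian, so is its pseudo-inverse, hence `P = V⁻¹ V` commutes with `V` and with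
`W = V + λ I`. Thus `y = W⁻¹ q` again lies in the range of `V` (`P y = y`), and writing
`q = W y = V y + λ y` gives `V⁻¹ q - y = λ V⁻¹ y`. Finally `‖y‖ = ‖V⁻¹ V y‖ ≤ ‖V⁻¹‖ ‖V y‖`, and
`‖V y‖ ≤ ‖W y‖ = ‖q‖` because `W² - V² = 2λ V + λ² I` is positive semidefinite.
-/

open Matrix
open scoped Matrix.Norms.L2Operator ComplexOrder

/-- The four Penrose equations characterizing the Moore–Penrose pseudo-inverse. -/
def IsMoorePenrose {m n : Type*} [Fintype m] [Fintype n] [DecidableEq m] [DecidableEq n]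
    (A : Matrix m n ℂ) (B : Matrix n m ℂ) : Prop :=
  A * B * A = A ∧ B * A * B = B ∧ (A * B)ᴴ = A * B ∧ (B * A)ᴴ = B * A

namespace IsMoorePenrose

variable {m n : Type*} [Fintype m] [Fintype n] [DecidableEq m] [DecidableEq n]

theorem unique {A : Matrix m n ℂ} {B C : Matrix n m ℂ}
    (hB : IsMoorePenrose A B) (hC : IsMoorePenrose A C) : B = C := by
  obtain ⟨hB₁, hB₂, hB₃, hB₄⟩ := hB
  obtain ⟨hC₁, hC₂, hC₃, hC₄⟩ := hC
  have hAB : A * B = A * C :=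
    calc A * B = (A * C) * (A * B) := by rw [← Matrix.mul_assoc (A * C), hC₁]
    _ = ((A * B) * (A * C))ᴴ := by rw [conjTranspose_mul, hB₃, hC₃]
    _ = A * C := by rw [← Matrix.mul_assoc, hB₁, hC₃]
  have hBA : B * A = C * A :=
    calc B * A = (B * A) * (C * A) := by rw [Matrix.mul_assoc B, ← Matrix.mul_assoc A, hC₁]
    _ = ((C * A) * (B * A))ᴴ := by rw [conjTranspose_mul, hB₄, hC₄]
    _ = C * A := by rw [Matrix.mul_assoc, ← Matrix.mul_assoc A, hB₁, hC₄]
  calc B = B * A * B := hB₂.symm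
  _ = C * A * C := by rw [Matrix.mul_assoc, hAB, ← Matrix.mul_assoc, hBA]
  _ = C := hC₂

theorem conjTranspose {A : Matrix m n ℂ} {B : Matrix n m ℂ} (h : IsMoorePenrose A B) :
    IsMoorePenrose Aᴴ Bᴴ := by
  obtain ⟨h₁, h₂, h₃, h₄⟩ := h
  refine ⟨?_, ?_, ?_, ?_⟩
  · rw [← conjTranspose_mul, ← conjTranspose_mul, ← Matrix.mul_assoc, h₁]
  · rw [← conjTranspose_mul, ← conjTranspose_mul, ← Matrix.mul_assoc, h₂]
  · rw [← conjTranspose_mul, h₄]; exact h₄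
  · rw [← conjTranspose_mul, h₃]; exact h₃

theorem isHermitian {A B : Matrix n n ℂ} (hA : A.IsHermitian) (h : IsMoorePenrose A B) :
    B.IsHermitian :=
  (hA ▸ h.conjTranspose).unique h

theorem commute {A B : Matrix n n ℂ} (hA : A.IsHermitian) (h : IsMoorePenrose A B) :
    Commute B A := by
  rw [Commute, SemiconjBy, ← h.2.2.2, conjTranspose_mul, hA.eq, (h.isHermitian hA).eq]

end IsMoorePenrose

theorem Matrix.commute_nonsing_inv_right {n α : Type*} [Fintype n] [DecidableEq n] [CommRing α]
    {A B : Matrix n n α} (h : Commute A B) (hB : IsUnit B.det) : Commute A B⁻¹ :=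
  h.units_inv_right (u := nonsingInvUnit B hB)

section
open scoped MatrixOrder

theorem Matrix.PosSemidef.l2_opNorm_mul_le_add_smul_one_mul {n m : Type*} [Fintype n]
    [DecidableEq n] [Fintype m] [DecidableEq m] {V : Matrix n n ℂ} (hV : V.PosSemidef)
    {c : ℝ} (hc : 0 ≤ c) (y : Matrix n m ℂ) :
    ‖V * y‖ ≤ ‖(V + (c : ℂ) • 1) * y‖ := by
  set W := V + (c : ℂ) • (1 : Matrix n n ℂ)
  have hgap : (W * y)ᴴ * (W * y) - (V * y)ᴴ * (V * y)
      = yᴴ * ((2 * c : ℂ) • V + ((c : ℂ) ^ 2) • 1) * y := by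
    simp only [W, conjTranspose_mul, conjTranspose_add, conjTranspose_smul, conjTranspose_one,
      hV.isHermitian.eq, Complex.star_def, Complex.conj_ofReal]
    simp only [Matrix.mul_assoc, Matrix.add_mul, Matrix.mul_add, Matrix.smul_mul, Matrix.mul_smul,
      Matrix.one_mul, Matrix.mul_one, smul_add, smul_smul]
    module
  have hle : (V * y)ᴴ * (V * y) ≤ (W * y)ᴴ * (W * y) := by
    rw [Matrix.le_iff, hgap]
    refine PosSemidef.conjTranspose_mul_mul_same (PosSemidef.add ?_ ?_) y
    · exact hV.smul (by exact_mod_cast (by positivity : (0 : ℝ) ≤ 2 * c))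
    · exact PosSemidef.one.smul (by exact_mod_cast (by positivity : (0 : ℝ) ≤ c ^ 2))
  have hsq := CStarAlgebra.norm_le_norm_of_nonneg_of_le
    (posSemidef_conjTranspose_mul_self (V * y)).nonneg hle
  rw [l2_opNorm_conjTranspose_mul_self, l2_opNorm_conjTranspose_mul_self] at hsq
  exact mul_self_le_mul_self_iff (norm_nonneg _) (norm_nonneg _) |>.mpr hsq

end

/-- Perturbing a PSD matrix by `λ • I` moves the pseudo-inverse solution by at most
`λ ‖V⁻¹‖² ‖q‖`, provided `q` lies in the range of `V`. -/
theorem stmt0 {K : ℕ} (V Vinv : Matrix (Fin K) (Fin K) ℂ)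
    (hV : V.PosSemidef) (hVinv : IsMoorePenrose V Vinv)
    (q : Matrix (Fin K) (Fin 1) ℂ) (hq : Vinv * V * q = q)
    (lam : ℝ) (hlam : 0 < lam)
    (W : Matrix (Fin K) (Fin K) ℂ) (hW : W = V + (lam : ℂ) • (1 : Matrix (Fin K) (Fin K) ℂ)) :
    ‖Vinv * q - W⁻¹ * q‖ ≤ lam * ‖Vinv‖ ^ 2 * ‖q‖ := by
  have hWdet : IsUnit W.det := by
    rw [← isUnit_iff_isUnit_det, hW]
    exact (PosDef.posSemidef_add hV (PosDef.one.smul (Complex.zero_lt_real.mpr hlam))).isUnit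
  have hPW : Commute (Vinv * V) W := by
    rw [hW]
    exact ((hVinv.commute hV.isHermitian).mul_left (Commute.refl V)).add_right
      ((Commute.one_right _).smul_right _)
  set y := W⁻¹ * q
  have hWy : W * y = q := by rw [← Matrix.mul_assoc, mul_nonsing_inv W hWdet, Matrix.one_mul]
  have hPy : Vinv * V * y = y := by
    rw [← Matrix.mul_assoc, (commute_nonsing_inv_right hPW hWdet).eq, Matrix.mul_assoc, hq]
  have hdiff : Vinv * q - y = (lam : ℂ) • (Vinv * y) := by
    rw [← hWy, hW, Matrix.add_mul, Matrix.mul_add, ← Matrix.mul_assoc, hPy, Matrix.smul_mul,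
      Matrix.one_mul, Matrix.mul_smul, add_sub_cancel_left]
  have hVy : ‖V * y‖ ≤ ‖q‖ := by
    simpa only [← hW, hWy] using hV.l2_opNorm_mul_le_add_smul_one_mul hlam.le y
  have hy : ‖y‖ ≤ ‖Vinv‖ * ‖q‖ :=
    calc ‖y‖ = ‖Vinv * (V * y)‖ := by rw [← Matrix.mul_assoc, hPy]
    _ ≤ ‖Vinv‖ * ‖V * y‖ := l2_opNorm_mul _ _
    _ ≤ ‖Vinv‖ * ‖q‖ := by gcongr
  calc ‖Vinv * q - y‖ = lam * ‖Vinv * y‖ := by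
        rw [hdiff, norm_smul, Complex.norm_real, Real.norm_of_nonneg hlam.le]
  _ ≤ lam * (‖Vinv‖ * (‖Vinv‖ * ‖q‖)) := by gcongr; exact (l2_opNorm_mul _ _).trans (by gcongr)
  _ = lam * ‖Vinv‖ ^ 2 * ‖q‖ := by ring
end

section
/- Let U₁, …, U_M be unitaries on ℂ^N, U_comb := Σ_{i=1}^M |i⟩⟨i| ⊗ Uᵢ on ℂ^M ⊗ ℂ^N, and U_copy be a unitary satisfying U_copy(|i⟩⊗|0⟩) = |i⟩⊗|i⟩ for basis states |i⟩ (with M ≤ N). Define the reflection R := I − 2 Σᵢ |i⟩⟨i| ⊗ |0⟩⟨0| and Ũ_{A1} := (H^{⊗m}⊗I) U_comb R U_copy† (H^{⊗m}⊗I), Ũ_{A2} := (H^{⊗m}⊗I) U_comb U_copy† (H^{⊗m}⊗I), where M = 2^m and H^{⊗m} is the m-fold Hadamard. Then the top-left block of Ũ_{A2} − Ũ_{A1} satisfies ⟨0^m| (Ũ_{A2} − Ũ_{A1}) |0^m⟩ = (2/M) Σ_{i=1}^M (Uᵢ|0⟩)⟨i|, i.e., it equals (2/M) times the matrix A whose i-th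 column is Uᵢ|0⟩. -/
open Matrix
open Kronecker

/-- The `m`-fold tensor power of the Hadamard gate, as a `2^m × 2^m` matrix:
`(H^{⊗m})_{ij} = 2^{-m/2} (−1)^{Σ_k i_k j_k}` where `i_k, j_k` are the binary digits. -/
noncomputable def hadamardPow (m : ℕ) : Matrix (Fin (2 ^ m)) (Fin (2 ^ m)) ℂ :=
  fun i j => ((Real.sqrt (2 ^ m) : ℂ))⁻¹ *
    (-1 : ℂ) ^ (∑ k ∈ Finset.range m,
      if Nat.testBit i.val k ∧ Nat.testBit j.val k then 1 else 0 : ℕ)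

/-! Since `R = 1 − 2S` with `S = Σᵢ |i,0⟩⟨i,0|`, the difference `Ũ_{A2} − Ũ_{A1}` is
`2 (H^{⊗m} ⊗ 1) U_comb S U_copy† (H^{⊗m} ⊗ 1)`. The copy property turns `S U_copy†` into
`Σᵢ |i,0⟩⟨i,i|`, and `U_comb |i,0⟩ = |i⟩ ⊗ Uᵢ|0⟩`. Finally, row and column `0` of `H^{⊗m}` are
constantly `2^{-m/2}`, so the top-left block of `(H^{⊗m} ⊗ 1) X (H^{⊗m} ⊗ 1)` is `2^{-m}` times
the sum of all blocks of `X`. -/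

lemma hadamardPow_zero_apply (m : ℕ) (j : Fin (2 ^ m)) :
    hadamardPow m 0 j = (Real.sqrt (2 ^ m) : ℂ)⁻¹ := by
  simp [hadamardPow]

lemma hadamardPow_apply_zero (m : ℕ) (i : Fin (2 ^ m)) :
    hadamardPow m i 0 = (Real.sqrt (2 ^ m) : ℂ)⁻¹ := by
  simp [hadamardPow]

lemma kronecker_one_mul_mul_kronecker_one_apply {ι κ R : Type*} [Fintype ι] [Fintype κ]
    [DecidableEq κ] [CommSemiring R] (H G : Matrix ι ι R) (M : Matrix (ι × κ) (ι × κ) R)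
    (i j : ι) (k l : κ) :
    ((H ⊗ₖ (1 : Matrix κ κ R)) * M * (G ⊗ₖ 1) : Matrix (ι × κ) (ι × κ) R) (i, k) (j, l) =
      ∑ a, ∑ b, H i a * M (a, k) (b, l) * G b j := by
  simp only [mul_apply, kroneckerMap_apply, one_apply, mul_ite, mul_one, mul_zero, ite_mul,
    zero_mul, Fintype.sum_prod_type, Finset.sum_ite_eq, Finset.mem_univ, ↓reduceIte,
    Finset.sum_mul, Finset.sum_ite_eq']
  exact Finset.sum_comm

lemma hadamardPow_kronecker_conj_apply_zero (m : ℕ) {κ : Type*} [Fintype κ] [DecidableEq κ]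
    (M : Matrix (Fin (2 ^ m) × κ) (Fin (2 ^ m) × κ) ℂ) (k l : κ) :
    ((hadamardPow m ⊗ₖ (1 : Matrix κ κ ℂ)) * M * (hadamardPow m ⊗ₖ 1) :
      Matrix (Fin (2 ^ m) × κ) (Fin (2 ^ m) × κ) ℂ) (0, k) (0, l) =
      (2 ^ m : ℂ)⁻¹ * ∑ a, ∑ b, M (a, k) (b, l) := by
  have hsq : (Real.sqrt (2 ^ m) : ℂ)⁻¹ * (Real.sqrt (2 ^ m) : ℂ)⁻¹ = (2 ^ m : ℂ)⁻¹ := by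
    rw [← mul_inv, ← Complex.ofReal_mul, Real.mul_self_sqrt (by positivity)]
    push_cast; rfl
  simp only [kronecker_one_mul_mul_kronecker_one_apply, hadamardPow_zero_apply,
    hadamardPow_apply_zero, Finset.mul_sum]
  refine Finset.sum_congr rfl fun a _ => Finset.sum_congr rfl fun b _ => ?_
  rw [← hsq]; ring

lemma single_mul_conjTranspose_eq_single {ι α : Type*} [Fintype ι] [DecidableEq ι] [Semiring α]
    [StarRing α] {X : Matrix ι ι α} {j k : ι} (hX : ∀ p, X p j = if p = k then 1 else 0)
    (i : ι) : single i j (1 : α) * Xᴴ = single i k 1 := by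
  ext r s
  by_cases hr : i = r
  · simp [mul_apply, single, hr, hX, eq_comm, apply_ite star]
  · simp [mul_apply, single, hr]

lemma sum_single_kronecker_apply {ι κ α : Type*} [Fintype ι] [DecidableEq ι] [Semiring α]
    (U : ι → Matrix κ κ α) (a b : ι) (k d : κ) :
    (∑ i, single i i (1 : α) ⊗ₖ U i) (a, k) (b, d) = if a = b then U a k d else 0 := by
  simp [Matrix.sum_apply, single, ite_and, eq_comm]

lemma mul_single_apply {ρ ι κ α : Type*} [Fintype ι] [DecidableEq ι] [DecidableEq κ]
    [NonUnitalNonAssocSemiring α] (M : Matrix ρ ι α) (i : ι) (j : κ) (c : α) (a : ρ) (b : κ) :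
    (M * single i j c) a b = if b = j then M a i * c else 0 := by
  split_ifs with h
  · rw [h, mul_single_apply_same]
  · exact mul_single_apply_of_ne c i j a b h M

theorem stmt14_general (m N : ℕ) [NeZero N] (hMN : 2 ^ m ≤ N)
    (U : Fin (2 ^ m) → Matrix (Fin N) (Fin N) ℂ)
    (Ucomb : Matrix (Fin (2 ^ m) × Fin N) (Fin (2 ^ m) × Fin N) ℂ)
    (hUcomb : Ucomb = ∑ i : Fin (2 ^ m), Matrix.single i i (1 : ℂ) ⊗ₖ U i)
    (Ucopy : Matrix (Fin (2 ^ m) × Fin N) (Fin (2 ^ m) × Fin N) ℂ)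
    (hUcopy : ∀ i : Fin (2 ^ m), ∀ p : Fin (2 ^ m) × Fin N,
      Ucopy p (i, (0 : Fin N)) = if p = (i, Fin.castLE hMN i) then 1 else 0)
    (Rrefl : Matrix (Fin (2 ^ m) × Fin N) (Fin (2 ^ m) × Fin N) ℂ)
    (hR : Rrefl = 1 - (2 : ℂ) • ∑ i : Fin (2 ^ m),
      Matrix.single (i, (0 : Fin N)) (i, (0 : Fin N)) (1 : ℂ))
    (UA1 UA2 : Matrix (Fin (2 ^ m) × Fin N) (Fin (2 ^ m) × Fin N) ℂ)
    (hUA1 : UA1 = (hadamardPow m ⊗ₖ (1 : Matrix (Fin N) (Fin N) ℂ)) * Ucomb * Rrefl * Ucopyᴴ *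
      (hadamardPow m ⊗ₖ (1 : Matrix (Fin N) (Fin N) ℂ)))
    (hUA2 : UA2 = (hadamardPow m ⊗ₖ (1 : Matrix (Fin N) (Fin N) ℂ)) * Ucomb * Ucopyᴴ *
      (hadamardPow m ⊗ₖ (1 : Matrix (Fin N) (Fin N) ℂ))) :
    (fun (k l : Fin N) => (UA2 - UA1) ((0 : Fin (2 ^ m)), k) ((0 : Fin (2 ^ m)), l)) =
      fun (k l : Fin N) => (2 / (2 ^ m : ℂ)) *
        ∑ i : Fin (2 ^ m), (U i) k (0 : Fin N) * (if l = Fin.castLE hMN i then 1 else 0) := by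
  set H := hadamardPow m ⊗ₖ (1 : Matrix (Fin N) (Fin N) ℂ)
  set S := ∑ i : Fin (2 ^ m), single (i, (0 : Fin N)) (i, (0 : Fin N)) (1 : ℂ) with hS
  have hcopy : S * Ucopyᴴ = ∑ i, single (i, (0 : Fin N)) (i, Fin.castLE hMN i) (1 : ℂ) := by
    rw [hS, Finset.sum_mul]
    exact Finset.sum_congr rfl fun i _ => single_mul_conjTranspose_eq_single (hUcopy i) _
  have hdiff : UA2 - UA1 =
      H * ((2 : ℂ) • (Ucomb * ∑ i, single (i, (0 : Fin N)) (i, Fin.castLE hMN i) (1 : ℂ))) * H := by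
    rw [hUA1, hUA2, hR, ← hcopy]
    noncomm_ring
  funext k l
  have hcol : ∀ a i, Ucomb (a, k) (i, 0) = if a = i then U a k 0 else 0 := fun a i => by
    rw [hUcomb, sum_single_kronecker_apply]
  have hentry : ∀ a b, (Ucomb * ∑ i, single (i, (0 : Fin N)) (i, Fin.castLE hMN i) (1 : ℂ))
      (a, k) (b, l) = if a = b then (if l = Fin.castLE hMN a then U a k 0 else 0) else 0 := by
    intro a b
    by_cases hab : a = b <;>
      simp [Matrix.mul_sum, Matrix.sum_apply, mul_single_apply, hcol, ite_and, hab]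
  rw [hdiff, hadamardPow_kronecker_conj_apply_zero]
  simp only [Matrix.smul_apply, smul_eq_mul, hentry, mul_ite, mul_zero, mul_one,
    Finset.sum_ite_eq, Finset.mem_univ, if_true]
  rw [Finset.mul_sum, Finset.mul_sum]
  refine Finset.sum_congr rfl fun i _ => ?_
  split_ifs <;> ring

/-- Block-encoding identity for the column-access input model: with
`U_comb = Σᵢ |i⟩⟨i|⊗Uᵢ`, a copy unitary `U_copy(|i⟩⊗|0⟩) = |i⟩⊗|i⟩`, the reflection
`R = I − 2Σᵢ|i⟩⟨i|⊗|0⟩⟨0|`, and `Ũ_{A1}, Ũ_{A2}` as in the paper, the top-left block of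
`Ũ_{A2} − Ũ_{A1}` equals `(2/M) Σᵢ (Uᵢ|0⟩)⟨i|`. -/
theorem stmt14 (m N : ℕ) [NeZero N] (hMN : 2 ^ m ≤ N)
    (U : Fin (2 ^ m) → Matrix (Fin N) (Fin N) ℂ)
    (hU : ∀ i, U i ∈ Matrix.unitaryGroup (Fin N) ℂ)
    (Ucomb : Matrix (Fin (2 ^ m) × Fin N) (Fin (2 ^ m) × Fin N) ℂ)
    (hUcomb : Ucomb = ∑ i : Fin (2 ^ m), Matrix.single i i (1 : ℂ) ⊗ₖ U i)
    (Ucopy : Matrix (Fin (2 ^ m) × Fin N) (Fin (2 ^ m) × Fin N) ℂ)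
    (hUcopyU : Ucopy ∈ Matrix.unitaryGroup (Fin (2 ^ m) × Fin N) ℂ)
    (hUcopy : ∀ i : Fin (2 ^ m), ∀ p : Fin (2 ^ m) × Fin N,
      Ucopy p (i, (0 : Fin N)) = if p = (i, Fin.castLE hMN i) then 1 else 0)
    (Rrefl : Matrix (Fin (2 ^ m) × Fin N) (Fin (2 ^ m) × Fin N) ℂ)
    (hR : Rrefl = 1 - (2 : ℂ) • ∑ i : Fin (2 ^ m),
      Matrix.single (i, (0 : Fin N)) (i, (0 : Fin N)) (1 : ℂ))
    (UA1 UA2 : Matrix (Fin (2 ^ m) × Fin N) (Fin (2 ^ m) × Fin N) ℂ)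
    (hUA1 : UA1 = (hadamardPow m ⊗ₖ (1 : Matrix (Fin N) (Fin N) ℂ)) * Ucomb * Rrefl * Ucopyᴴ *
      (hadamardPow m ⊗ₖ (1 : Matrix (Fin N) (Fin N) ℂ)))
    (hUA2 : UA2 = (hadamardPow m ⊗ₖ (1 : Matrix (Fin N) (Fin N) ℂ)) * Ucomb * Ucopyᴴ *
      (hadamardPow m ⊗ₖ (1 : Matrix (Fin N) (Fin N) ℂ))) :
    (fun (k l : Fin N) => (UA2 - UA1) ((0 : Fin (2 ^ m)), k) ((0 : Fin (2 ^ m)), l)) =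
      fun (k l : Fin N) => (2 / (2 ^ m : ℂ)) *
        ∑ i : Fin (2 ^ m), (U i) k (0 : Fin N) * (if l = Fin.castLE hMN i then 1 else 0) :=
  stmt14_general m N hMN U Ucomb hUcomb Ucopy hUcopy Rrefl hR UA1 UA2 hUA1 hUA2
end

section
/- Define the n×n matrix M over 𝔽₂ whose first column and diagonal entries are 1 and all other entries are 0 (so M represents the CNOT circuit consisting of CNOT_{1,j} for j = 2,…,n). Then M can be written as a product of at most 2⌈log₂ n⌉ − 1 'parallel layers', where each layer is a product of elementary row-addition matrices E_{i→j} (adding row i to row j over 𝔽₂) whose index pairs (i,j) are pairwise disjoint within the layer. -/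
open Matrix

/-- The elementary row-addition matrix over `𝔽₂`: left multiplication adds row `i` to row `j`. -/
def rowAdd (n : ℕ) (i j : Fin n) : Matrix (Fin n) (Fin n) (ZMod 2) :=
  1 + Matrix.single j i 1

/-- A matrix is a 'parallel layer' of CNOT gates if it is a product of elementary row-addition
matrices whose index pairs are pairwise disjoint. -/
def IsLayer {n : ℕ} (L : Matrix (Fin n) (Fin n) (ZMod 2)) : Prop :=
  ∃ ps : List (Fin n × Fin n),
    (∀ p ∈ ps, p.1 ≠ p.2) ∧
    ps.Pairwise (fun p q => p.1 ≠ q.1 ∧ p.1 ≠ q.2 ∧ p.2 ≠ q.1 ∧ p.2 ≠ q.2) ∧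
    L = (ps.map (fun p => rowAdd n p.1 p.2)).prod

/-! Fan-out onto the qubits `[0, h)` is obtained from fan-out onto `[0, k)`, `k = ⌈h/2⌉`, by
two shift layers: first add `x (i - k)` to `x i` for `k < i < h`, then fan out onto `[0, k)`,
then add `x (i - k)` to `x i` for `k ≤ i < h`. For `k < i < h` the second addition brings the
fanned-out `x (i - k) + x 0`, so over `𝔽₂` the two copies of `x (i - k)` cancel and `x i + x 0`
remains. Each halving of `h` costs two layers, and fan-out onto two qubits is a single gate. -/

section

variable {n : ℕ}

theorem prod_map_rowAdd {ps : List (Fin n × Fin n)} (hps : ps.Pairwise fun p q => p.1 ≠ q.2) :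
    (ps.map fun p => rowAdd n p.1 p.2).prod = 1 + (ps.map fun p => single p.2 p.1 1).sum := by
  induction ps with
  | nil => simp
  | cons p ps ih =>
    rw [List.pairwise_cons] at hps
    have hvanish : single p.2 p.1 (1 : ZMod 2) * (ps.map fun q => single q.2 q.1 1).sum = 0 := by
      rw [← List.sum_map_mul_left]
      refine List.sum_eq_zero fun _ hm => ?_
      obtain ⟨q, hq, rfl⟩ := List.mem_map.mp hm
      simp [hps.1 q hq]
    rw [List.map_cons, List.prod_cons, ih hps.2, rowAdd, List.map_cons, List.sum_cons, add_mul,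
      one_mul, mul_add, mul_one, hvanish, add_zero]
    abel

/-- Adds the original row `src i` to row `i` for every `i ∈ T` simultaneously. -/
def cnotMatrix (T : Finset (Fin n)) (src : Fin n → Fin n) : Matrix (Fin n) (Fin n) (ZMod 2) :=
  1 + ∑ i ∈ T, single i (src i) 1

theorem cnotMatrix_mul_apply (T : Finset (Fin n)) (src : Fin n → Fin n)
    (X : Matrix (Fin n) (Fin n) (ZMod 2)) (i j : Fin n) :
    (cnotMatrix T src * X) i j = X i j + if i ∈ T then X (src i) j else 0 := by
  have hsingle (c : Fin n) :
      (single c (src c) (1 : ZMod 2) * X) i j = if i = c then X (src c) j else 0 := by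
    split_ifs with h
    · rw [h, single_mul_apply_same, one_mul]
    · exact single_mul_apply_of_ne (h := h) ..
  simp only [cnotMatrix, add_mul, one_mul, Finset.sum_mul, Matrix.add_apply, Matrix.sum_apply,
    hsingle, Finset.sum_ite_eq]

theorem cnotMatrix_apply (T : Finset (Fin n)) (src : Fin n → Fin n) (i j : Fin n) :
    cnotMatrix T src i j =
      (1 : Matrix (Fin n) (Fin n) (ZMod 2)) i j + if i ∈ T ∧ src i = j then 1 else 0 := by
  rw [← mul_one (cnotMatrix T src), cnotMatrix_mul_apply, one_apply, one_apply, ite_and]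

theorem isLayer_cnotMatrix {T : Finset (Fin n)} {src : Fin n → Fin n}
    (hsrc : ∀ i ∈ T, src i ∉ T) (hinj : Set.InjOn src T) : IsLayer (cnotMatrix T src) := by
  have hdisjoint : (T.toList.map fun i => (src i, i)).Pairwise
      fun p q => p.1 ≠ q.1 ∧ p.1 ≠ q.2 ∧ p.2 ≠ q.1 ∧ p.2 ≠ q.2 := by
    refine List.pairwise_map.mpr (T.nodup_toList.pairwise_of_forall_ne ?_)
    intro i hi j hj hij
    rw [Finset.mem_toList] at hi hj
    refine ⟨fun h => hij (hinj hi hj h), fun h => hsrc i hi ?_, fun h => hsrc j hj ?_, hij⟩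
    · rwa [show src i = j from h]
    · rwa [← show i = src j from h]
  refine ⟨_, ?_, hdisjoint, ?_⟩
  · simp only [List.mem_map, Finset.mem_toList]
    rintro _ ⟨i, hi, rfl⟩ h
    exact hsrc i hi (by rwa [show src i = i from h])
  · rw [prod_map_rowAdd (hdisjoint.imp fun h => h.2.1), List.map_map]
    simp only [cnotMatrix, Function.comp_def, Finset.sum_map_toList]

def fanOut (n h : ℕ) [NeZero n] : Matrix (Fin n) (Fin n) (ZMod 2) :=
  cnotMatrix {i | 0 < (i : ℕ) ∧ (i : ℕ) < h} fun _ => 0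

def shiftLayer (n k a b : ℕ) : Matrix (Fin n) (Fin n) (ZMod 2) :=
  cnotMatrix {i | a ≤ (i : ℕ) ∧ (i : ℕ) < b} fun i => ⟨i - k, by omega⟩

theorem fanOut_of_le_one [NeZero n] {h : ℕ} (h1 : h ≤ 1) : fanOut n h = 1 := by
  ext i j
  simp only [fanOut, cnotMatrix_apply, Finset.mem_filter, Finset.mem_univ, true_and]
  rw [if_neg (by omega), add_zero]

theorem isLayer_fanOut [NeZero n] {h : ℕ} (h2 : h ≤ 2) : IsLayer (fanOut n h) := by
  refine isLayer_cnotMatrix (fun i _ => by simp) fun i hi j hj _ => ?_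
  simp only [Finset.coe_filter, Finset.mem_univ, true_and, Set.mem_ofPred_eq] at hi hj
  exact Fin.ext (by omega)

theorem isLayer_shiftLayer {k a b : ℕ} (hka : k ≤ a) (hb : b ≤ a + k) :
    IsLayer (shiftLayer n k a b) := by
  refine isLayer_cnotMatrix (fun i hi => ?_) fun i hi j hj h => ?_
  · simp only [Finset.mem_filter, Finset.mem_univ, true_and] at hi ⊢
    omega
  · simp only [Finset.coe_filter, Finset.mem_univ, true_and, Set.mem_ofPred_eq,
      Fin.ext_iff] at hi hj h ⊢
    omega

theorem fanOut_eq_shiftLayer_mul_fanOut_mul_shiftLayer [NeZero n] {k h : ℕ} (hkh : k ≤ h)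
    (hhk : h ≤ 2 * k) :
    fanOut n h = shiftLayer n k k h * fanOut n k * shiftLayer n k (k + 1) h := by
  ext i j
  simp only [fanOut, shiftLayer, mul_assoc, cnotMatrix_mul_apply, cnotMatrix_apply,
    Finset.mem_filter, Finset.mem_univ, true_and, one_apply, Fin.ext_iff, Fin.val_zero]
  split_ifs <;> first | rfl | decide | omega

def HasLayerDepth (L : Matrix (Fin n) (Fin n) (ZMod 2)) (d : ℕ) : Prop :=
  ∃ Ls : List (Matrix (Fin n) (Fin n) (ZMod 2)),
    Ls.length ≤ d ∧ (∀ L ∈ Ls, IsLayer L) ∧ Ls.prod = L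

theorem hasLayerDepth_one : HasLayerDepth (1 : Matrix (Fin n) (Fin n) (ZMod 2)) 0 :=
  ⟨[], le_rfl, by simp, rfl⟩

theorem IsLayer.hasLayerDepth {L : Matrix (Fin n) (Fin n) (ZMod 2)} (hL : IsLayer L) :
    HasLayerDepth L 1 :=
  ⟨[L], le_rfl, by simpa using hL, List.prod_singleton⟩

theorem HasLayerDepth.mono {L : Matrix (Fin n) (Fin n) (ZMod 2)} {d d' : ℕ}
    (hL : HasLayerDepth L d) (hd : d ≤ d') : HasLayerDepth L d' :=
  let ⟨Ls, hlen, hLs, hprod⟩ := hL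
  ⟨Ls, hlen.trans hd, hLs, hprod⟩

theorem HasLayerDepth.layer_mul_mul_layer {A X B : Matrix (Fin n) (Fin n) (ZMod 2)} {d : ℕ}
    (hX : HasLayerDepth X d) (hA : IsLayer A) (hB : IsLayer B) :
    HasLayerDepth (A * X * B) (d + 2) := by
  obtain ⟨Ls, hlen, hLs, rfl⟩ := hX
  refine ⟨A :: Ls ++ [B], by simp [hlen], ?_, by simp [mul_assoc]⟩
  simp only [List.cons_append, List.mem_cons, List.mem_append, List.not_mem_nil, or_false]
  rintro L (rfl | hL | rfl)
  exacts [hA, hLs L hL, hB]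

theorem hasLayerDepth_fanOut [NeZero n] (h : ℕ) :
    HasLayerDepth (fanOut n h) (2 * Nat.clog 2 h - 1) := by
  induction h using Nat.strong_induction_on with
  | _ h ih =>
  rcases (show h ≤ 1 ∨ h = 2 ∨ 3 ≤ h by omega) with h1 | rfl | h3
  · simpa [fanOut_of_le_one h1] using hasLayerDepth_one.mono (Nat.zero_le _)
  · simpa [Nat.clog_eq_one] using (isLayer_fanOut (n := n) le_rfl).hasLayerDepth
  · obtain ⟨k, hk⟩ : ∃ k, k = (h + 1) / 2 := ⟨_, rfl⟩
    have hclog : Nat.clog 2 h = Nat.clog 2 k + 1 := by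
      rw [Nat.clog_of_two_le one_lt_two (by omega), show (h + 2 - 1) / 2 = k by omega]
    have hclog_pos : 0 < Nat.clog 2 k := Nat.clog_pos one_lt_two (by omega)
    rw [fanOut_eq_shiftLayer_mul_fanOut_mul_shiftLayer (k := k) (by omega) (by omega)]
    refine ((ih k (by omega)).layer_mul_mul_layer (isLayer_shiftLayer le_rfl (by omega))
      (isLayer_shiftLayer (by omega) (by omega))).mono ?_
    omega

end

/-- The fan-out matrix `M` over `𝔽₂` (first column and diagonal equal to 1, representing the
circuit of `CNOT_{1,j}`, `j = 2,…,n`) decomposes into at most `2⌈log₂ n⌉ − 1` parallel layers. -/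
theorem stmt15 (n : ℕ) [NeZero n]
    (M : Matrix (Fin n) (Fin n) (ZMod 2))
    (hM : M = fun i j => if j = 0 ∨ i = j then 1 else 0) :
    ∃ Ls : List (Matrix (Fin n) (Fin n) (ZMod 2)),
      Ls.length ≤ 2 * Nat.clog 2 n - 1 ∧ (∀ L ∈ Ls, IsLayer L) ∧ Ls.prod = M := by
  have hfanOut : fanOut n n = M := by
    ext i j
    simp only [hM, fanOut, cnotMatrix_apply, one_apply, Finset.mem_filter, Finset.mem_univ,
      true_and, Fin.ext_iff, Fin.val_zero]
    split_ifs <;> first | rfl | decide | omega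
  exact hfanOut ▸ hasLayerDepth_fanOut n
end
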